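/- arXiv:2605.17001 — 4 statements merged into one kernel-verified Lean document; each statement's English description precedes it below -/
import Mathlib

section
/- In the matrix setup below, at every (s, t) where G(s, t) is invertible, writing H := H₁ + t·H₂, the following second-derivative identities hold: (1) ∂²_{ss} P(s, t) = ∂²_{st} Q(s, t) = Tr(G⁻¹ H · (G⁻¹ Z)²); (2) ∂²_{st} P(s, t) = ∂²_{tt} Q(s, t) = −(1/2)·Tr(G⁻¹ Z · G⁻¹ H₂) + Tr(G⁻¹ Z · (G⁻¹ H)²); (3) ∂²_{tt} P(s, t) = −(3/2)·Tr(G⁻¹ H · G⁻¹ H₂) + Tr((G⁻¹ H)³); (4) ∂²_{ss} Q(s, t) = Tr((G⁻¹ Z)³), where G = G(s,t). -/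
/-!
Both `P` and `Q` have the form `y ↦ ½ Tr(G(y)⁻¹ K(y))` along a line in `s` or `t`, and
`d(G⁻¹) = -G⁻¹ (dG) G⁻¹`. So every first partial is a combination of traces of products of the
blocks `G⁻¹Z`, `G⁻¹H`, `G⁻¹H₂`, and differentiating once more produces traces of products of
three blocks, which cyclicity of the trace collects into the stated formulas. Invertibility of
`G` is an open condition, so the first-derivative formulas hold near `(s, t)`, as needed to
differentiate them again.
-/

open Filter Topology

namespace Matrix

section Calculus

attribute [local instance] Matrix.linftyOpNormedRing Matrix.linftyOpNormedAlgebra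

variable {𝕜 m : Type*} [RCLike 𝕜] [Fintype m] [DecidableEq m]

theorem eventually_isUnit_of_continuousAt {G : 𝕜 → Matrix m m 𝕜} {x : 𝕜}
    (hG : ContinuousAt G x) (hx : IsUnit (G x)) : ∀ᶠ y in 𝓝 x, IsUnit (G y) :=
  hG.eventually_mem (Units.isOpen.mem_nhds hx :)

theorem hasDerivAt_inv {G : 𝕜 → Matrix m m 𝕜} {G' : Matrix m m 𝕜} {x : 𝕜}
    (hG : HasDerivAt G G' x) (hx : IsUnit (G x)) :
    HasDerivAt (fun y => (G y)⁻¹) (-((G x)⁻¹ * G' * (G x)⁻¹)) x := by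
  obtain ⟨u, hu⟩ := hx
  have h := (hu ▸ hasFDerivAt_ringInverse (𝕜 := 𝕜) u).comp_hasDerivAt x hG
  simp only [Function.comp_def, ← nonsing_inv_eq_ringInverse, coe_units_inv, hu] at h
  exact h

theorem _root_.HasDerivAt.matrix_trace {F : 𝕜 → Matrix m m 𝕜} {F' : Matrix m m 𝕜} {x : 𝕜}
    (hF : HasDerivAt F F' x) : HasDerivAt (fun y => (F y).trace) F'.trace x :=
  (traceLinearMap m 𝕜 𝕜).toContinuousLinearMap.hasFDerivAt.comp_hasDerivAt x hF

theorem hasDerivAt_trace_inv_mul {G K : 𝕜 → Matrix m m 𝕜} {G' K' : Matrix m m 𝕜} {x : 𝕜}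
    (hG : HasDerivAt G G' x) (hK : HasDerivAt K K' x) (hx : IsUnit (G x)) :
    HasDerivAt (fun y => ((G y)⁻¹ * K y).trace)
      (((G x)⁻¹ * K').trace - ((G x)⁻¹ * G' * ((G x)⁻¹ * K x)).trace) x := by
  refine ((hasDerivAt_inv hG hx).mul hK).matrix_trace.congr_deriv ?_
  simp only [neg_mul, trace_add, trace_neg, Matrix.mul_assoc]
  ring

theorem hasDerivAt_trace_inv_mul_inv_mul {G X Y : 𝕜 → Matrix m m 𝕜} {G' X' Y' : Matrix m m 𝕜}
    {x : 𝕜} (hG : HasDerivAt G G' x) (hX : HasDerivAt X X' x) (hY : HasDerivAt Y Y' x)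
    (hx : IsUnit (G x)) :
    HasDerivAt (fun y => ((G y)⁻¹ * X y * ((G y)⁻¹ * Y y)).trace)
      (((G x)⁻¹ * X' * ((G x)⁻¹ * Y x)).trace + ((G x)⁻¹ * X x * ((G x)⁻¹ * Y')).trace
        - ((G x)⁻¹ * G' * ((G x)⁻¹ * X x) * ((G x)⁻¹ * Y x)).trace
        - ((G x)⁻¹ * X x * ((G x)⁻¹ * G') * ((G x)⁻¹ * Y x)).trace) x := by
  have hinv := hasDerivAt_inv hG hx
  refine ((hinv.mul hX).mul (hinv.mul hY)).matrix_trace.congr_deriv ?_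
  simp only [Pi.mul_apply, neg_mul, add_mul, mul_add, mul_neg, trace_add, trace_neg,
    Matrix.mul_assoc]
  ring

end Calculus

end Matrix

namespace MetricFamily

open Matrix

attribute [local instance] Matrix.linftyOpNormedRing Matrix.linftyOpNormedAlgebra

variable {m : Type*} [Fintype m] [DecidableEq m] {A Z H₁ H₂ : Matrix m m ℝ} {q f₁ f₂ s t : ℝ}

variable (A Z H₁ H₂) in
noncomputable def G (s t : ℝ) : Matrix m m ℝ := A + s • Z + t • H₁ + (t ^ 2 / 2) • H₂

variable (A Z H₁ H₂ q) in
noncomputable def Q (s t : ℝ) : ℝ := 1 / 2 * ((G A Z H₁ H₂ s t)⁻¹ * Z).trace - q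

variable (A Z H₁ H₂ f₁ f₂) in
noncomputable def P (s t : ℝ) : ℝ :=
  1 / 2 * ((G A Z H₁ H₂ s t)⁻¹ * (H₁ + t • H₂)).trace - (f₁ + t * f₂)

theorem hasDerivAt_G_left (s t : ℝ) : HasDerivAt (fun s' => G A Z H₁ H₂ s' t) Z s :=
  (((((hasDerivAt_id s).smul_const Z).const_add A).add_const _).add_const _).congr_deriv
    (one_smul ℝ Z)

theorem hasDerivAt_G_right (s t : ℝ) : HasDerivAt (G A Z H₁ H₂ s) (H₁ + t • H₂) t := by
  have h := (((hasDerivAt_id t).smul_const H₁).const_add (A + s • Z)).add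
    (((hasDerivAt_pow 2 t).div_const 2).smul_const H₂)
  exact h.congr_deriv (by simp)

variable (H₁ H₂) in
theorem hasDerivAt_tangent (t : ℝ) : HasDerivAt (fun t' => H₁ + t' • H₂) H₂ t :=
  (((hasDerivAt_id t).smul_const H₂).const_add H₁).congr_deriv (one_smul ℝ H₂)

local notation "𝒢" => G A Z H₁ H₂

theorem eventually_isUnit_G_left (hx : IsUnit (𝒢 s t)) : ∀ᶠ s' in 𝓝 s, IsUnit (𝒢 s' t) :=
  eventually_isUnit_of_continuousAt (hasDerivAt_G_left s t).continuousAt hx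

theorem eventually_isUnit_G_right (hx : IsUnit (𝒢 s t)) : ∀ᶠ t' in 𝓝 t, IsUnit (𝒢 s t') :=
  eventually_isUnit_of_continuousAt (hasDerivAt_G_right s t).continuousAt hx

theorem hasDerivAt_Q_left (hx : IsUnit (𝒢 s t)) :
    HasDerivAt (fun s' => Q A Z H₁ H₂ q s' t)
      (-(1 / 2) * ((𝒢 s t)⁻¹ * Z * ((𝒢 s t)⁻¹ * Z)).trace) s :=
  (((hasDerivAt_trace_inv_mul (hasDerivAt_G_left s t) (hasDerivAt_const s Z) hx).const_mul
    (1 / 2 : ℝ)).sub_const q).congr_deriv (by simp)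

theorem hasDerivAt_Q_right (hx : IsUnit (𝒢 s t)) :
    HasDerivAt (Q A Z H₁ H₂ q s)
      (-(1 / 2) * ((𝒢 s t)⁻¹ * (H₁ + t • H₂) * ((𝒢 s t)⁻¹ * Z)).trace) t :=
  (((hasDerivAt_trace_inv_mul (hasDerivAt_G_right s t) (hasDerivAt_const t Z) hx).const_mul
    (1 / 2 : ℝ)).sub_const q).congr_deriv (by simp)

theorem hasDerivAt_P_left (hx : IsUnit (𝒢 s t)) :
    HasDerivAt (fun s' => P A Z H₁ H₂ f₁ f₂ s' t)
      (-(1 / 2) * ((𝒢 s t)⁻¹ * Z * ((𝒢 s t)⁻¹ * (H₁ + t • H₂))).trace) s :=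
  (((hasDerivAt_trace_inv_mul (hasDerivAt_G_left s t) (hasDerivAt_const s (H₁ + t • H₂))
    hx).const_mul (1 / 2 : ℝ)).sub_const _).congr_deriv (by simp)

theorem hasDerivAt_P_right (hx : IsUnit (𝒢 s t)) :
    HasDerivAt (P A Z H₁ H₂ f₁ f₂ s)
      (-(1 / 2) * ((𝒢 s t)⁻¹ * (H₁ + t • H₂) * ((𝒢 s t)⁻¹ * (H₁ + t • H₂))).trace
        + 1 / 2 * ((𝒢 s t)⁻¹ * H₂).trace - f₂) t :=
  (((hasDerivAt_trace_inv_mul (hasDerivAt_G_right s t) (hasDerivAt_tangent H₁ H₂ t) hx).const_mul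
    (1 / 2 : ℝ)).sub (((hasDerivAt_id t).mul_const f₂).const_add f₁)).congr_deriv (by simp; ring)

theorem deriv_left_deriv_left_P (hx : IsUnit (𝒢 s t)) :
    deriv (fun s' => deriv (fun s'' => P A Z H₁ H₂ f₁ f₂ s'' t) s') s =
      ((𝒢 s t)⁻¹ * (H₁ + t • H₂) * ((𝒢 s t)⁻¹ * Z) ^ 2).trace := by
  have h := (hasDerivAt_trace_inv_mul_inv_mul (hasDerivAt_G_left s t) (hasDerivAt_const s Z)
    (hasDerivAt_const s (H₁ + t • H₂)) hx).const_mul (-(1 / 2) : ℝ)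
  rw [(h.congr_of_eventuallyEq ((eventually_isUnit_G_left hx).mono
    fun s' hs' => (hasDerivAt_P_left hs').deriv)).deriv]
  simp only [Matrix.mul_zero, Matrix.zero_mul, trace_zero]
  set u := (𝒢 s t)⁻¹ * Z
  set v := (𝒢 s t)⁻¹ * (H₁ + t • H₂)
  simp only [sq, Matrix.mul_assoc]
  rw [trace_mul_cycle' u u v]
  ring

theorem deriv_left_deriv_right_Q (hx : IsUnit (𝒢 s t)) :
    deriv (fun s' => deriv (fun t' => Q A Z H₁ H₂ q s' t') t) s =
      ((𝒢 s t)⁻¹ * (H₁ + t • H₂) * ((𝒢 s t)⁻¹ * Z) ^ 2).trace := by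
  have h := (hasDerivAt_trace_inv_mul_inv_mul (hasDerivAt_G_left s t)
    (hasDerivAt_const s (H₁ + t • H₂)) (hasDerivAt_const s Z) hx).const_mul (-(1 / 2) : ℝ)
  rw [(h.congr_of_eventuallyEq ((eventually_isUnit_G_left hx).mono
    fun s' hs' => (hasDerivAt_Q_right hs').deriv)).deriv]
  simp only [Matrix.mul_zero, Matrix.zero_mul, trace_zero]
  set u := (𝒢 s t)⁻¹ * Z
  set v := (𝒢 s t)⁻¹ * (H₁ + t • H₂)
  simp only [sq, Matrix.mul_assoc]
  rw [trace_mul_cycle' u v u, trace_mul_cycle' u u v]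
  ring

theorem deriv_left_deriv_right_P (hx : IsUnit (𝒢 s t)) :
    deriv (fun s' => deriv (fun t' => P A Z H₁ H₂ f₁ f₂ s' t') t) s =
      -(1 / 2) * ((𝒢 s t)⁻¹ * Z * ((𝒢 s t)⁻¹ * H₂)).trace +
        ((𝒢 s t)⁻¹ * Z * ((𝒢 s t)⁻¹ * (H₁ + t • H₂)) ^ 2).trace := by
  have hH := hasDerivAt_const s (H₁ + t • H₂)
  have h := (((hasDerivAt_trace_inv_mul_inv_mul (hasDerivAt_G_left s t) hH hH hx).const_mul
    (-(1 / 2) : ℝ)).add ((hasDerivAt_trace_inv_mul (hasDerivAt_G_left s t)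
      (hasDerivAt_const s H₂) hx).const_mul (1 / 2 : ℝ))).sub_const f₂
  rw [(h.congr_of_eventuallyEq ((eventually_isUnit_G_left hx).mono
    fun s' hs' => (hasDerivAt_P_right hs').deriv)).deriv]
  simp only [Matrix.mul_zero, Matrix.zero_mul, trace_zero]
  set u := (𝒢 s t)⁻¹ * Z
  set v := (𝒢 s t)⁻¹ * (H₁ + t • H₂)
  simp only [sq, Matrix.mul_assoc]
  rw [trace_mul_cycle' v u v, trace_mul_cycle' v v u]
  ring

theorem deriv_right_deriv_right_Q (hx : IsUnit (𝒢 s t)) :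
    deriv (fun t' => deriv (fun t'' => Q A Z H₁ H₂ q s t'') t') t =
      -(1 / 2) * ((𝒢 s t)⁻¹ * Z * ((𝒢 s t)⁻¹ * H₂)).trace +
        ((𝒢 s t)⁻¹ * Z * ((𝒢 s t)⁻¹ * (H₁ + t • H₂)) ^ 2).trace := by
  have h := (hasDerivAt_trace_inv_mul_inv_mul (hasDerivAt_G_right s t) (hasDerivAt_tangent H₁ H₂ t)
    (hasDerivAt_const t Z) hx).const_mul (-(1 / 2) : ℝ)
  rw [(h.congr_of_eventuallyEq ((eventually_isUnit_G_right hx).mono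
    fun t' ht' => (hasDerivAt_Q_right ht').deriv)).deriv]
  simp only [Matrix.mul_zero, trace_zero]
  set u := (𝒢 s t)⁻¹ * Z
  set v := (𝒢 s t)⁻¹ * (H₁ + t • H₂)
  set w := (𝒢 s t)⁻¹ * H₂
  simp only [sq, Matrix.mul_assoc]
  rw [trace_mul_comm w u, trace_mul_cycle' v v u]
  ring

theorem deriv_right_deriv_right_P (hx : IsUnit (𝒢 s t)) :
    deriv (fun t' => deriv (fun t'' => P A Z H₁ H₂ f₁ f₂ s t'') t') t =
      -(3 / 2) * ((𝒢 s t)⁻¹ * (H₁ + t • H₂) * ((𝒢 s t)⁻¹ * H₂)).trace +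
        (((𝒢 s t)⁻¹ * (H₁ + t • H₂)) ^ 3).trace := by
  have hH := hasDerivAt_tangent H₁ H₂ t
  have h := (((hasDerivAt_trace_inv_mul_inv_mul (hasDerivAt_G_right s t) hH hH hx).const_mul
    (-(1 / 2) : ℝ)).add ((hasDerivAt_trace_inv_mul (hasDerivAt_G_right s t)
      (hasDerivAt_const t H₂) hx).const_mul (1 / 2 : ℝ))).sub_const f₂
  rw [(h.congr_of_eventuallyEq ((eventually_isUnit_G_right hx).mono
    fun t' ht' => (hasDerivAt_P_right ht').deriv)).deriv]
  simp only [Matrix.mul_zero, trace_zero]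
  set v := (𝒢 s t)⁻¹ * (H₁ + t • H₂)
  set w := (𝒢 s t)⁻¹ * H₂
  simp only [pow_succ, pow_zero, Matrix.one_mul, Matrix.mul_assoc]
  rw [trace_mul_comm w v]
  ring

theorem deriv_left_deriv_left_Q (hx : IsUnit (𝒢 s t)) :
    deriv (fun s' => deriv (fun s'' => Q A Z H₁ H₂ q s'' t) s') s =
      (((𝒢 s t)⁻¹ * Z) ^ 3).trace := by
  have h := (hasDerivAt_trace_inv_mul_inv_mul (hasDerivAt_G_left s t) (hasDerivAt_const s Z)
    (hasDerivAt_const s Z) hx).const_mul (-(1 / 2) : ℝ)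
  rw [(h.congr_of_eventuallyEq ((eventually_isUnit_G_left hx).mono
    fun s' hs' => (hasDerivAt_Q_left hs').deriv)).deriv]
  simp only [Matrix.mul_zero, Matrix.zero_mul, trace_zero, pow_succ, pow_zero, Matrix.one_mul]
  ring

end MetricFamily

theorem stmt_3_general {n : ℕ}
    (A Z H₁ H₂ : Matrix (Fin n) (Fin n) ℝ)
    (q f₁ f₂ : ℝ)
    (G : ℝ → ℝ → Matrix (Fin n) (Fin n) ℝ)
    (hG : ∀ s t, G s t = A + s • Z + t • H₁ + (t ^ 2 / 2) • H₂)
    (Q P : ℝ → ℝ → ℝ)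
    (hQ : ∀ s t, Q s t = (1 / 2) * ((G s t)⁻¹ * Z).trace - q)
    (hP : ∀ s t, P s t = (1 / 2) * ((G s t)⁻¹ * (H₁ + t • H₂)).trace - (f₁ + t * f₂))
    (s t : ℝ) (hinv : IsUnit (G s t)) :
    (deriv (fun s' => deriv (fun s'' => P s'' t) s') s =
        ((G s t)⁻¹ * (H₁ + t • H₂) * ((G s t)⁻¹ * Z) ^ 2).trace ∧
      deriv (fun s' => deriv (fun t' => Q s' t') t) s =
        ((G s t)⁻¹ * (H₁ + t • H₂) * ((G s t)⁻¹ * Z) ^ 2).trace) ∧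
    (deriv (fun s' => deriv (fun t' => P s' t') t) s =
        -(1 / 2) * ((G s t)⁻¹ * Z * ((G s t)⁻¹ * H₂)).trace +
          ((G s t)⁻¹ * Z * ((G s t)⁻¹ * (H₁ + t • H₂)) ^ 2).trace ∧
      deriv (fun t' => deriv (fun t'' => Q s t'') t') t =
        -(1 / 2) * ((G s t)⁻¹ * Z * ((G s t)⁻¹ * H₂)).trace +
          ((G s t)⁻¹ * Z * ((G s t)⁻¹ * (H₁ + t • H₂)) ^ 2).trace) ∧
    deriv (fun t' => deriv (fun t'' => P s t'') t') t =
        -(3 / 2) * ((G s t)⁻¹ * (H₁ + t • H₂) * ((G s t)⁻¹ * H₂)).trace +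
          (((G s t)⁻¹ * (H₁ + t • H₂)) ^ 3).trace ∧
    deriv (fun s' => deriv (fun s'' => Q s'' t) s') s = (((G s t)⁻¹ * Z) ^ 3).trace := by
  obtain rfl : G = MetricFamily.G A Z H₁ H₂ := funext fun s => funext (hG s)
  obtain rfl : Q = MetricFamily.Q A Z H₁ H₂ q := funext fun s => funext (hQ s)
  obtain rfl : P = MetricFamily.P A Z H₁ H₂ f₁ f₂ := funext fun s => funext (hP s)
  open MetricFamily in
  exact ⟨⟨deriv_left_deriv_left_P hinv, deriv_left_deriv_right_Q hinv⟩,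
    ⟨deriv_left_deriv_right_P hinv, deriv_right_deriv_right_Q hinv⟩,
    deriv_right_deriv_right_P hinv, deriv_left_deriv_left_Q hinv⟩

/-- Second-derivative identities for the trace quantities `Q` and `P` along the
two-parameter family of matrices `G(s,t) = A + s·Z + t·H₁ + (t²/2)·H₂`. -/
theorem stmt_3 {n : ℕ} (hn : 1 ≤ n)
    (A Z H₁ H₂ : Matrix (Fin n) (Fin n) ℝ)
    (hA : A.IsSymm) (hZ : Z.IsSymm) (hH₁ : H₁.IsSymm) (hH₂ : H₂.IsSymm)
    (hApd : A.PosDef) (q f₁ f₂ : ℝ)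
    (G : ℝ → ℝ → Matrix (Fin n) (Fin n) ℝ)
    (hG : ∀ s t, G s t = A + s • Z + t • H₁ + (t ^ 2 / 2) • H₂)
    (Q P : ℝ → ℝ → ℝ)
    (hQ : ∀ s t, Q s t = (1 / 2) * ((G s t)⁻¹ * Z).trace - q)
    (hP : ∀ s t, P s t = (1 / 2) * ((G s t)⁻¹ * (H₁ + t • H₂)).trace - (f₁ + t * f₂))
    (s t : ℝ) (hinv : IsUnit (G s t)) :
    (deriv (fun s' => deriv (fun s'' => P s'' t) s') s =
        ((G s t)⁻¹ * (H₁ + t • H₂) * ((G s t)⁻¹ * Z) ^ 2).trace ∧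
      deriv (fun s' => deriv (fun t' => Q s' t') t) s =
        ((G s t)⁻¹ * (H₁ + t • H₂) * ((G s t)⁻¹ * Z) ^ 2).trace) ∧
    (deriv (fun s' => deriv (fun t' => P s' t') t) s =
        -(1 / 2) * ((G s t)⁻¹ * Z * ((G s t)⁻¹ * H₂)).trace +
          ((G s t)⁻¹ * Z * ((G s t)⁻¹ * (H₁ + t • H₂)) ^ 2).trace ∧
      deriv (fun t' => deriv (fun t'' => Q s t'') t') t =
        -(1 / 2) * ((G s t)⁻¹ * Z * ((G s t)⁻¹ * H₂)).trace +
          ((G s t)⁻¹ * Z * ((G s t)⁻¹ * (H₁ + t • H₂)) ^ 2).trace) ∧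
    deriv (fun t' => deriv (fun t'' => P s t'') t') t =
        -(3 / 2) * ((G s t)⁻¹ * (H₁ + t • H₂) * ((G s t)⁻¹ * H₂)).trace +
          (((G s t)⁻¹ * (H₁ + t • H₂)) ^ 3).trace ∧
    deriv (fun s' => deriv (fun s'' => Q s'' t) s') s = (((G s t)⁻¹ * Z) ^ 3).trace :=
  stmt_3_general A Z H₁ H₂ q f₁ f₂ G hG Q P hQ hP s t hinv
end

section
/- Let γ ∈ (1/2, 1) and C > 0, and let (w_j)_{j ≥ 0} be a nondecreasing sequence of real numbers converging to a limit Θ such that Θ − w_j ≤ C·(w_{j+1} − w_{j−1})^γ for every j ≥ 1. Then there exists a constant C′, depending only on γ, C and Θ − w₀, such that Θ − w_j ≤ C′·(j + 1)^{−γ/(1−γ)} for all j ≥ 0. -/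
/-!
With `a j = Θ - w j ≥ 0` nonincreasing and `q = γ / (1 - γ)`, so that `1 + 1/q = 1/γ`, the
Lojasiewicz inequality gives the two-step recursion `a (j+2) + a (j+2) ^ (1/γ) / C ^ (1/γ) ≤ a j`.
The map `t ↦ t + t ^ (1/γ) / C ^ (1/γ)` is strictly increasing, so along each parity class `a` is dominated
by any supersolution of the recursion with larger initial value. For `K` large, `K (m+1) ^ (-q)`
is such a supersolution: by Bernoulli's inequality `s ^ (-q) - (s+1) ^ (-q) ≤ q / (s+1) · s ^ (-q)`,
and `K ^ (1/q)` absorbs the factor `q 2 ^ q`. Passing from `m` to `j ≈ 2m` costs another `2 ^ q`.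
-/

open Real

lemma StrictMonoOn.le_of_map_succ_le {α : Type*} [LinearOrder α] {f : α → α} {s : Set α}
    (hf : StrictMonoOn f s) {x y : ℕ → α} (hxs : ∀ m, x m ∈ s) (hys : ∀ m, y m ∈ s)
    (h0 : x 0 ≤ y 0) (hx : ∀ m, f (x (m + 1)) ≤ x m) (hy : ∀ m, y m ≤ f (y (m + 1)))
    (m : ℕ) : x m ≤ y m := by
  induction m with
  | zero => exact h0
  | succ m ih => exact (hf.le_iff_le (hxs _) (hys _)).1 ((hx m).trans (ih.trans (hy m)))

lemma rpow_neg_le_two_rpow_mul_rpow_neg {q s t : ℝ} (hq : 0 ≤ q) (hs : 0 < s) (ht : 0 < t)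
    (hts : t ≤ 2 * s) : s ^ (-q) ≤ 2 ^ q * t ^ (-q) := by
  calc s ^ (-q) = 2 ^ q * (2 * s) ^ (-q) := by
        rw [mul_rpow zero_le_two hs.le, rpow_neg zero_le_two, ← mul_assoc,
          mul_inv_cancel₀ (rpow_pos_of_pos two_pos q).ne', one_mul]
    _ ≤ 2 ^ q * t ^ (-q) :=
        mul_le_mul_of_nonneg_left (rpow_le_rpow_of_nonpos ht hts (by linarith)) (by positivity)

lemma one_sub_div_mul_rpow_neg_le {q s : ℝ} (hq : 1 ≤ q) (hs : 0 < s) :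
    (1 - q / (s + 1)) * s ^ (-q) ≤ (s + 1) ^ (-q) := by
  have hs1 : 0 < s + 1 := by linarith
  have hbern := one_add_mul_self_le_rpow_one_add (s := -(s + 1)⁻¹)
    (by rw [neg_le_neg_iff]; exact inv_le_one_of_one_le₀ (by linarith)) hq
  have hsplit : 1 + -(s + 1)⁻¹ = s / (s + 1) := by field_simp; ring
  rw [hsplit, div_rpow hs.le hs1.le] at hbern
  rw [rpow_neg hs.le, rpow_neg hs1.le]
  calc (1 - q / (s + 1)) * (s ^ q)⁻¹ = (1 + q * -(s + 1)⁻¹) * (s ^ q)⁻¹ := by ring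
    _ ≤ s ^ q / (s + 1) ^ q * (s ^ q)⁻¹ := by gcongr
    _ = ((s + 1) ^ q)⁻¹ := by field_simp

lemma rpow_neg_le_rpow_neg_succ_mul {q s : ℝ} (hq : 1 ≤ q) (hs : 1 ≤ s) :
    s ^ (-q) ≤ (s + 1) ^ (-q) * (1 + q * 2 ^ q / (s + 1)) := by
  have hbern := one_sub_div_mul_rpow_neg_le hq (by linarith : 0 < s)
  have hdouble := rpow_neg_le_two_rpow_mul_rpow_neg (q := q) (s := s) (t := s + 1) (by linarith) (by linarith)
    (by linarith) (by linarith)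
  have hqs : 0 ≤ q / (s + 1) := by positivity
  calc s ^ (-q) ≤ (s + 1) ^ (-q) + q / (s + 1) * s ^ (-q) := by linarith
    _ ≤ (s + 1) ^ (-q) + q / (s + 1) * (2 ^ q * (s + 1) ^ (-q)) := by gcongr
    _ = (s + 1) ^ (-q) * (1 + q * 2 ^ q / (s + 1)) := by ring

lemma mul_rpow_neg_le_add_rpow_div {q c K s : ℝ} (hq : 1 ≤ q) (hc : 0 < c) (hK : 0 ≤ K)
    (hKc : q * 2 ^ q * c ≤ K ^ q⁻¹) (hs : 1 ≤ s) :
    K * s ^ (-q) ≤ K * (s + 1) ^ (-q) + (K * (s + 1) ^ (-q)) ^ (1 + q⁻¹) / c := by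
  have hs1 : 0 < s + 1 := by linarith
  set u := K * (s + 1) ^ (-q) with hu
  have hpow : u ^ (1 + q⁻¹) = u * (K ^ q⁻¹ / (s + 1)) := by
    rw [rpow_one_add' (by positivity) (by positivity), hu, mul_rpow hK (by positivity),
      ← rpow_mul hs1.le, neg_mul, mul_inv_cancel₀ (by positivity), rpow_neg_one, div_eq_mul_inv]
  have hfactor : q * 2 ^ q / (s + 1) ≤ K ^ q⁻¹ / (s + 1) / c :=
    calc q * 2 ^ q / (s + 1) = q * 2 ^ q * c / (s + 1) / c := by field_simp
      _ ≤ K ^ q⁻¹ / (s + 1) / c := by gcongr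
  calc K * s ^ (-q) ≤ K * ((s + 1) ^ (-q) * (1 + q * 2 ^ q / (s + 1))) := by
        gcongr; exact rpow_neg_le_rpow_neg_succ_mul hq hs
    _ = u * (1 + q * 2 ^ q / (s + 1)) := by ring
    _ ≤ u * (1 + K ^ q⁻¹ / (s + 1) / c) := by gcongr
    _ = u + u ^ (1 + q⁻¹) / c := by rw [hpow]; ring

lemma le_mul_rpow_neg_of_add_rpow_div_le {q c K : ℝ} {x : ℕ → ℝ} (hq : 1 ≤ q) (hc : 0 < c)
    (hK : 0 ≤ K) (hKc : q * 2 ^ q * c ≤ K ^ q⁻¹) (hx : ∀ m, 0 ≤ x m) (h0 : x 0 ≤ K)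
    (hrec : ∀ m, x (m + 1) + x (m + 1) ^ (1 + q⁻¹) / c ≤ x m) (m : ℕ) :
    x m ≤ K * ((m : ℝ) + 1) ^ (-q) := by
  have hmono : StrictMonoOn (fun t : ℝ => t + t ^ (1 + q⁻¹) / c) (Set.Ici 0) :=
    strictMonoOn_id.add_monotone fun a ha b hb hab =>
      div_le_div_of_nonneg_right
        (monotoneOn_rpow_Ici_of_exponent_nonneg (by positivity) ha hb hab) hc.le
  refine hmono.le_of_map_succ_le (x := x) (y := fun m => K * ((m : ℝ) + 1) ^ (-q)) hx
    (fun m => Set.mem_Ici.2 (by positivity)) (by simpa using h0) hrec (fun m => ?_) m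
  have := mul_rpow_neg_le_add_rpow_div (s := (m : ℝ) + 1) hq hc hK hKc (by simp)
  simpa only [Nat.cast_succ] using this

lemma le_two_rpow_mul_rpow_neg_of_add_rpow_div_le {q c K : ℝ} {x : ℕ → ℝ} (hq : 1 ≤ q)
    (hc : 0 < c) (hK : 0 ≤ K) (hKc : q * 2 ^ q * c ≤ K ^ q⁻¹) (hx : ∀ j, 0 ≤ x j)
    (h0 : x 0 ≤ K) (h1 : x 1 ≤ K) (hrec : ∀ j, x (j + 2) + x (j + 2) ^ (1 + q⁻¹) / c ≤ x j)
    (j : ℕ) : x j ≤ 2 ^ q * K * ((j : ℝ) + 1) ^ (-q) := by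
  have hparity := le_mul_rpow_neg_of_add_rpow_div_le (x := fun m => x (2 * m + j % 2)) hq hc hK
    hKc (fun _ => hx _) (by rcases Nat.mod_two_eq_zero_or_one j with h | h <;> simp [h, h0, h1])
    (fun m => by
      have := hrec (2 * m + j % 2)
      rwa [show 2 * m + j % 2 + 2 = 2 * (m + 1) + j % 2 by ring] at this) (j / 2)
  rw [Nat.div_add_mod] at hparity
  have hj : (j : ℝ) + 1 ≤ 2 * ((j / 2 : ℕ) + 1 : ℝ) := by
    have : j + 1 ≤ 2 * (j / 2 + 1) := by omega
    exact_mod_cast this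
  calc x j ≤ K * ((j / 2 : ℕ) + 1 : ℝ) ^ (-q) := hparity
    _ ≤ K * (2 ^ q * ((j : ℝ) + 1) ^ (-q)) := by
        gcongr
        exact rpow_neg_le_two_rpow_mul_rpow_neg (by linarith) (by positivity) (by positivity) hj
    _ = 2 ^ q * K * ((j : ℝ) + 1) ^ (-q) := by ring

lemma add_rpow_inv_div_le_of_le_mul_rpow {γ C a b d : ℝ} (hγ : 0 < γ) (hC : 0 < C)
    (hb : 0 ≤ b) (hba : b ≤ a) (hbd : b ≤ d) (h : a ≤ C * (d - b) ^ γ) :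
    b + b ^ γ⁻¹ / C ^ γ⁻¹ ≤ d := by
  have hroot : (b / C) ^ γ⁻¹ ≤ d - b :=
    (rpow_inv_le_iff_of_pos (by positivity) (by linarith) hγ).2
      (by rw [div_le_iff₀' hC]; linarith)
  rw [div_rpow hb hC.le] at hroot
  linarith

/-- Discrete Lojasiewicz iteration: a nondecreasing sequence `w` converging to `Θ` with
`Θ - w j ≤ C (w (j+1) - w (j-1))^γ` satisfies the polynomial decay
`Θ - w j ≤ C' (j+1)^{-γ/(1-γ)}`, where `C'` depends only on `γ`, `C` and `Θ - w 0`. -/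
theorem stmt_8 (γ C D : ℝ) (hγ : γ ∈ Set.Ioo (1 / 2 : ℝ) 1) (hC : 0 < C) :
    ∃ C' : ℝ, ∀ (w : ℕ → ℝ) (Θ : ℝ), Monotone w →
      Filter.Tendsto w Filter.atTop (nhds Θ) →
      Θ - w 0 ≤ D →
      (∀ j : ℕ, 1 ≤ j → Θ - w j ≤ C * (w (j + 1) - w (j - 1)) ^ γ) →
      ∀ j : ℕ, Θ - w j ≤ C' * ((j : ℝ) + 1) ^ (-(γ / (1 - γ))) := by
  obtain ⟨hγ1, hγ2⟩ := hγ
  set q := γ / (1 - γ)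
  have hq : 1 ≤ q := by rw [le_div_iff₀ (by linarith)]; linarith
  have hqγ : 1 + q⁻¹ = γ⁻¹ := by
    rw [inv_div]; field_simp; ring
  set c := C ^ γ⁻¹
  have hc : 0 < c := by positivity
  set K := max D ((q * 2 ^ q * c) ^ q)
  have hK : 0 ≤ K := le_max_of_le_right (by positivity)
  have hKc : q * 2 ^ q * c ≤ K ^ q⁻¹ :=
    calc q * 2 ^ q * c = ((q * 2 ^ q * c) ^ q) ^ q⁻¹ :=
          (rpow_rpow_inv (by positivity) (by positivity)).symm
      _ ≤ K ^ q⁻¹ := by gcongr; exact le_max_right _ _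
  refine ⟨2 ^ q * K, fun w Θ hw hlim hD hloj j => ?_⟩
  have hwΘ : ∀ j, w j ≤ Θ := hw.ge_of_tendsto hlim
  refine le_two_rpow_mul_rpow_neg_of_add_rpow_div_le hq hc hK hKc (fun j => sub_nonneg.2 (hwΘ j))
    (hD.trans (le_max_left _ _)) ((sub_le_sub_left (hw zero_le_one) Θ).trans
      (hD.trans (le_max_left _ _))) (fun j => ?_) j
  rw [hqγ]
  refine add_rpow_inv_div_le_of_le_mul_rpow (a := Θ - w (j + 1)) (by linarith) hC
    (sub_nonneg.2 (hwΘ _)) (by linarith [hw (j + 1).le_succ]) (by linarith [hw (j.le_add_right 2)]) ?_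
  simpa using hloj (j + 1) (by omega)
end

section
/- Let γ ∈ (1/2, 1), ζ ∈ (1 − γ, 1) and C > 0, and let (w_j)_{j ≥ 0} be a nondecreasing sequence of real numbers converging to a limit Θ such that Θ − w_j ≤ C·(w_{j+1} − w_{j−1})^γ for every j ≥ 1. Then the series ∑_{j ≥ 1} (w_j − w_{j−1})^ζ converges. -/
/-!
Put `d j = Θ - w j`. Along even indices the Łojasiewicz inequality becomes the one-step recursion
`d (2k+2) ≤ C (d (2k) - d (2k+2))^γ`, which forces the decay `d j = O(j^(-γ/(1-γ)))`; hence
`∑ d j ^ s < ∞` for every `s > (1-γ)/γ`. Young's inequality bounds `(d j - d (j+1))^ζ` by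
`ζ d j ^ (-μ) (d j - d (j+1)) + (1-ζ) d j ^ s` with `μ = s(1-ζ)/ζ`; when `μ < 1`, concavity of
`t ↦ t^(1-μ)` dominates the first term by the telescoping `(d j^(1-μ) - d (j+1)^(1-μ))/(1-μ)`.
The condition `ζ > 1 - γ` is exactly what leaves room for `(1-γ)/γ < s < ζ/(1-ζ)`.
-/

open Real

theorem mul_rpow_sub_one_mul_sub_le_rpow_sub_rpow {x y p : ℝ} (hx : 0 < x) (hy : 0 ≤ y)
    (hp0 : 0 ≤ p) (hp1 : p ≤ 1) : p * x ^ (p - 1) * (x - y) ≤ x ^ p - y ^ p := by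
  have bernoulli := rpow_one_add_le_one_add_mul_self (s := y / x - 1) (by
    linarith [div_nonneg hy hx.le]) hp0 hp1
  rw [add_sub_cancel, div_rpow hy hx.le, div_le_iff₀ (rpow_pos_of_pos hx p)] at bernoulli
  have hxp : x ^ p = x ^ (p - 1) * x := by rw [← rpow_add_one hx.ne', sub_add_cancel]
  calc p * x ^ (p - 1) * (x - y) = x ^ p - (1 + p * (y / x - 1)) * x ^ p := by
        rw [hxp]; field_simp; ring
    _ ≤ x ^ p - y ^ p := by linarith

theorem rpow_neg_sub_rpow_neg_le {x y α : ℝ} (hx : 0 < x) (hy : 0 < y) (hα : 0 ≤ α) :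
    x ^ (-α) - y ^ (-α) ≤ α * x ^ (-α - 1) * (y - x) := by
  have tangent : 1 - α * (y / x - 1) ≤ (y / x) ^ (-α) := by
    rw [rpow_def_of_pos (div_pos hy hx)]
    nlinarith [add_one_le_exp (log (y / x) * -α), log_le_sub_one_of_pos (div_pos hy hx)]
  rw [div_rpow hy.le hx.le, le_div_iff₀ (rpow_pos_of_pos hx _)] at tangent
  have hxα : x ^ (-α) = x ^ (-α - 1) * x := by rw [← rpow_add_one hx.ne', sub_add_cancel]
  calc x ^ (-α) - y ^ (-α) ≤ x ^ (-α) - (1 - α * (y / x - 1)) * x ^ (-α) := by linarith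
    _ = α * x ^ (-α - 1) * (y - x) := by rw [hxα]; field_simp; ring

theorem exists_le_mul_rpow_neg_of_le_mul_sub_rpow {e : ℕ → ℝ} {γ M : ℝ} (he : Antitone e)
    (hγ0 : 0 < γ) (hγ1 : γ < 1) (hM : 0 < M)
    (hrec : ∀ k, e (k + 1) ≤ M * (e k - e (k + 1)) ^ γ) :
    ∃ K, ∀ k : ℕ, 1 ≤ k → e k ≤ K * (k : ℝ) ^ (-(γ / (1 - γ))) := by
  have h1γ : 0 < 1 - γ := by linarith
  set α := γ / (1 - γ)
  have hα0 : 0 < α := div_pos hγ0 h1γ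
  have hαγ : (-α - 1) * γ = -α := by simp only [α]; field_simp [h1γ.ne']; ring
  set B := M * α ^ γ * 2 ^ α
  set K := max (e 1) (B ^ (1 - γ)⁻¹)
  have hB : 0 < B := by positivity
  have hK : 0 < K := lt_max_of_lt_right (by positivity)
  have hKB : B ≤ K ^ (1 - γ) := by
    calc B = (B ^ (1 - γ)⁻¹) ^ (1 - γ) := by
          rw [← rpow_mul hB.le, inv_mul_cancel₀ h1γ.ne', rpow_one]
      _ ≤ K ^ (1 - γ) := rpow_le_rpow (by positivity) (le_max_right _ _) h1γ.le
  refine ⟨K, fun k hk => ?_⟩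
  induction k, hk using Nat.le_induction with
  | base => simpa only [Nat.cast_one, one_rpow, mul_one] using le_max_left _ _
  | succ k hk ih =>
    -- Otherwise the gap `e k - e (k+1)` is at most `K α k^(-α-1)`, whose `γ`-th power is of
    -- order `K^γ k^(-α)`; the recursion then forces `K^(1-γ) < B`.
    by_contra! hlarge
    have hk1 : (1 : ℝ) ≤ k := by exact_mod_cast hk
    have hk0 : (0 : ℝ) < k := by linarith
    push_cast at hlarge
    have hgap : e k - e (k + 1) ≤ K * (α * k ^ (-α - 1)) := by
      have := rpow_neg_sub_rpow_neg_le hk0 (by linarith : (0 : ℝ) < k + 1) hα0.le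
      nlinarith
    have hupper : e (k + 1) ≤ M * K ^ γ * α ^ γ * k ^ (-α) := by
      calc e (k + 1) ≤ M * (K * (α * k ^ (-α - 1))) ^ γ :=
            (hrec k).trans (by gcongr; linarith [he (Nat.le_succ k)])
        _ = M * K ^ γ * α ^ γ * k ^ (-α) := by
            rw [mul_rpow hK.le (by positivity), mul_rpow hα0.le (by positivity),
              ← rpow_mul hk0.le, hαγ]; ring
    have hlower : K * 2 ^ (-α) * k ^ (-α) < e (k + 1) := by
      calc K * 2 ^ (-α) * k ^ (-α) = K * (2 * k) ^ (-α) := by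
            rw [mul_rpow (by norm_num) hk0.le]; ring
        _ ≤ K * (k + 1) ^ (-α) :=
            mul_le_mul_of_nonneg_left
              (rpow_le_rpow_of_nonpos (by linarith) (by linarith) (by linarith)) hK.le
        _ < e (k + 1) := hlarge
    have : K ^ (1 - γ) * K ^ γ < B * K ^ γ := by
      calc K ^ (1 - γ) * K ^ γ = K * 2 ^ (-α) * 2 ^ α := by
            rw [← rpow_add hK, sub_add_cancel, rpow_one, mul_assoc, ← rpow_add two_pos,
              neg_add_cancel, rpow_zero, mul_one]
        _ < M * K ^ γ * α ^ γ * 2 ^ α :=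
            mul_lt_mul_of_pos_right
              (lt_of_mul_lt_mul_right (hlower.trans_le hupper) (by positivity)) (by positivity)
        _ = B * K ^ γ := by ring
    exact (lt_of_mul_lt_mul_right this (by positivity)).not_ge hKB

theorem summable_rpow_of_le_mul_sub_rpow {e : ℕ → ℝ} {γ M s : ℝ} (he : Antitone e)
    (he0 : ∀ k, 0 ≤ e k) (hγ0 : 0 < γ) (hγ1 : γ < 1) (hM : 0 < M)
    (hrec : ∀ k, e (k + 1) ≤ M * (e k - e (k + 1)) ^ γ) (hs : (1 - γ) / γ < s) :
    Summable fun k => e k ^ s := by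
  obtain ⟨K, hK⟩ := exists_le_mul_rpow_neg_of_le_mul_sub_rpow he hγ0 hγ1 hM hrec
  have h1γ : 0 < 1 - γ := by linarith
  have hK0 : 0 ≤ K := by simpa using (he0 1).trans (hK 1 le_rfl)
  have hs0 : 0 < s := lt_of_le_of_lt (by positivity) hs
  have hαs : 1 < γ / (1 - γ) * s := by
    rw [div_mul_eq_mul_div, one_lt_div h1γ]
    linarith [(div_lt_iff₀ hγ0).mp hs]
  have hpseries : Summable fun k : ℕ => K ^ s * ((k + 1 : ℕ) : ℝ) ^ (-(γ / (1 - γ) * s)) :=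
    ((summable_nat_add_iff 1).mpr (summable_nat_rpow.mpr (by linarith))).mul_left _
  refine (summable_nat_add_iff 1).mp
    (hpseries.of_nonneg_of_le (fun k => rpow_nonneg (he0 _) s) fun k => ?_)
  calc e (k + 1) ^ s ≤ (K * ((k + 1 : ℕ) : ℝ) ^ (-(γ / (1 - γ)))) ^ s :=
        rpow_le_rpow (he0 _) (hK _ (by omega)) hs0.le
    _ = K ^ s * ((k + 1 : ℕ) : ℝ) ^ (-(γ / (1 - γ) * s)) := by
        rw [mul_rpow hK0 (by positivity), ← rpow_mul (by positivity), neg_mul]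

theorem Antitone.summable_of_summable_comp_two_mul {f : ℕ → ℝ} (hf : Antitone f)
    (hf0 : ∀ n, 0 ≤ f n) (h : Summable fun k => f (2 * k)) : Summable f :=
  h.even_add_odd (h.of_nonneg_of_le (fun _ => hf0 _) fun _ => hf (by omega))

theorem rpow_neg_mul_sub_le_div {x y μ : ℝ} (hy : 0 ≤ y) (hyx : y ≤ x) (hμ0 : 0 ≤ μ)
    (hμ1 : μ < 1) : x ^ (-μ) * (x - y) ≤ (x ^ (1 - μ) - y ^ (1 - μ)) / (1 - μ) := by
  rcases (hy.trans hyx).eq_or_lt with rfl | hx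
  · obtain rfl : y = 0 := le_antisymm hyx hy
    simp
  · have := mul_rpow_sub_one_mul_sub_le_rpow_sub_rpow hx hy (by linarith) (by linarith : 1 - μ ≤ 1)
    rw [sub_sub_cancel_left] at this
    rw [le_div_iff₀ (by linarith)]
    linarith

theorem Antitone.summable_rpow_neg_mul_sub {d : ℕ → ℝ} (hd : Antitone d) (hd0 : ∀ j, 0 ≤ d j)
    {μ : ℝ} (hμ0 : 0 ≤ μ) (hμ1 : μ < 1) : Summable fun j => d j ^ (-μ) * (d j - d (j + 1)) := by
  have hμ : 0 < 1 - μ := by linarith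
  refine summable_of_sum_range_le (c := d 0 ^ (1 - μ) / (1 - μ))
    (fun j => mul_nonneg (rpow_nonneg (hd0 j) _) (sub_nonneg.mpr (hd j.le_succ))) fun n => ?_
  calc ∑ j ∈ Finset.range n, d j ^ (-μ) * (d j - d (j + 1))
      ≤ ∑ j ∈ Finset.range n, (d j ^ (1 - μ) - d (j + 1) ^ (1 - μ)) / (1 - μ) :=
        Finset.sum_le_sum fun j _ => rpow_neg_mul_sub_le_div (hd0 _) (hd j.le_succ) hμ0 hμ1
    _ = (d 0 ^ (1 - μ) - d n ^ (1 - μ)) / (1 - μ) := by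
        rw [← Finset.sum_div, Finset.sum_range_sub' (fun j => d j ^ (1 - μ))]
    _ ≤ d 0 ^ (1 - μ) / (1 - μ) := by
        gcongr; linarith [rpow_nonneg (hd0 n) (1 - μ)]

theorem rpow_le_mul_rpow_neg_mul_add_mul_rpow {a x ζ s : ℝ} (ha : 0 ≤ a) (hx : 0 < x)
    (hζ0 : 0 < ζ) (hζ1 : ζ ≤ 1) :
    a ^ ζ ≤ ζ * (x ^ (-(s * (1 - ζ) / ζ)) * a) + (1 - ζ) * x ^ s := by
  have young := geom_mean_le_arith_mean2_weighted hζ0.le (by linarith : 0 ≤ 1 - ζ)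
    (mul_nonneg (rpow_nonneg hx.le (-(s * (1 - ζ) / ζ))) ha) (rpow_nonneg hx.le s) (by ring)
  have hexp : s * (1 - ζ) + -(s * (1 - ζ) / ζ) * ζ = 0 := by
    field_simp [hζ0.ne']; ring
  rwa [mul_rpow (rpow_nonneg hx.le _) ha, ← rpow_mul hx.le, ← rpow_mul hx.le, mul_comm,
    ← mul_assoc, ← rpow_add hx, hexp, rpow_zero, one_mul] at young

theorem Antitone.summable_sub_rpow {d : ℕ → ℝ} (hd : Antitone d) (hd0 : ∀ j, 0 ≤ d j)
    {ζ s : ℝ} (hζ0 : 0 < ζ) (hζ1 : ζ ≤ 1) (hs0 : 0 ≤ s) (hsζ : s * (1 - ζ) < ζ)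
    (hsum : Summable fun j => d j ^ s) :
    Summable fun j => (d j - d (j + 1)) ^ ζ := by
  set μ := s * (1 - ζ) / ζ
  have hμ0 : 0 ≤ μ := div_nonneg (mul_nonneg hs0 (by linarith)) hζ0.le
  have hμ1 : μ < 1 := (div_lt_one hζ0).mpr hsζ
  have hbound : ∀ j, (d j - d (j + 1)) ^ ζ ≤
      ζ * (d j ^ (-μ) * (d j - d (j + 1))) + (1 - ζ) * d j ^ s := by
    intro j
    have hstep : 0 ≤ d j - d (j + 1) := sub_nonneg.mpr (hd j.le_succ)
    rcases (hd0 j).eq_or_lt with hzero | hpos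
    · have : d (j + 1) = 0 := le_antisymm (hzero ▸ hd j.le_succ) (hd0 _)
      rw [← hzero, this, sub_zero, zero_rpow hζ0.ne']
      have : 0 ≤ 1 - ζ := by linarith
      positivity
    · exact rpow_le_mul_rpow_neg_mul_add_mul_rpow hstep hpos hζ0 hζ1
  exact Summable.of_nonneg_of_le (fun j => rpow_nonneg (sub_nonneg.mpr (hd j.le_succ)) ζ) hbound
    (((hd.summable_rpow_neg_mul_sub hd0 hμ0 hμ1).mul_left ζ).add (hsum.mul_left (1 - ζ)))

/-- Discrete summability under the Lojasiewicz inequality: if the nondecreasing sequence `w`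
converges to `Θ` and `Θ - w j ≤ C (w (j+1) - w (j-1))^γ`, then for `ζ ∈ (1-γ, 1)` the series
`∑ (w (j+1) - w j)^ζ` converges. -/
theorem stmt_9 (γ ζ C : ℝ) (hγ : γ ∈ Set.Ioo (1 / 2 : ℝ) 1) (hζ : ζ ∈ Set.Ioo (1 - γ) 1)
    (hC : 0 < C) (w : ℕ → ℝ) (Θ : ℝ) (hmono : Monotone w)
    (hlim : Filter.Tendsto w Filter.atTop (nhds Θ))
    (hloja : ∀ j : ℕ, 1 ≤ j → Θ - w j ≤ C * (w (j + 1) - w (j - 1)) ^ γ) :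
    Summable fun j : ℕ => (w (j + 1) - w j) ^ ζ := by
  obtain ⟨hγ_half, hγ1⟩ := hγ
  obtain ⟨hζγ, hζ1⟩ := hζ
  have hγ0 : 0 < γ := by linarith
  have h1ζ : 0 < 1 - ζ := by linarith
  set d : ℕ → ℝ := fun j => Θ - w j
  have hd : Antitone d := fun i j hij => sub_le_sub_left (hmono hij) Θ
  have hd0 : ∀ j, 0 ≤ d j := fun j => sub_nonneg.mpr (hmono.ge_of_tendsto hlim j)
  have hrec : ∀ k, d (2 * (k + 1)) ≤ C * (d (2 * k) - d (2 * (k + 1))) ^ γ := fun k => by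
    have h := hloja (2 * k + 1) (by omega)
    rw [Nat.add_sub_cancel, show 2 * k + 1 + 1 = 2 * (k + 1) by ring] at h
    calc d (2 * (k + 1)) ≤ d (2 * k + 1) := hd (by omega)
      _ ≤ C * (d (2 * k) - d (2 * (k + 1))) ^ γ := by simpa [d] using h
  have hgap : (1 - γ) / γ < ζ / (1 - ζ) := by
    rw [div_lt_div_iff₀ hγ0 h1ζ]; nlinarith
  obtain ⟨s, hs, hsζ⟩ := exists_between hgap
  have hs0 : 0 ≤ s := (div_nonneg (by linarith) hγ0.le).trans hs.le
  have hsum : Summable fun j => d j ^ s :=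
    Antitone.summable_of_summable_comp_two_mul (fun i j hij => rpow_le_rpow (hd0 _) (hd hij) hs0)
      (fun j => rpow_nonneg (hd0 j) s)
      (summable_rpow_of_le_mul_sub_rpow (fun i j hij => hd (by omega)) (fun k => hd0 _) hγ0 hγ1 hC
        hrec hs)
  simpa [d] using hd.summable_sub_rpow hd0 (by linarith) hζ1.le hs0 ((lt_div_iff₀ h1ζ).mp hsζ) hsum
end

section
/- Let γ ∈ (1/2, 1), a > 0, C > 0, s₀ ∈ ℝ, and let w : [s₀, ∞) → ℝ be a nondecreasing bounded function with supremum Θ satisfying Θ − w(s) ≤ C·(w(s + a) − w(s − a))^γ for every s ≥ s₀ + a. Then: (1) there exists C′, depending only on γ, a, C and Θ − w(s₀), such that Θ − w(s) ≤ C′·(1 + s − s₀)^{−γ/(1−γ)} for all s ≥ s₀ + a; and (2) for every ζ ∈ (1 − γ, 1), the integral ∫_{s₀+a}^{∞} (w(s′ + a) − w(s′ − a))^ζ ds′ is finite. -/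
/-!
Put `μ = (1 - γ) / γ` and sample `x n = Θ - w (s₀ + 2 n a)`. The Łojasiewicz inequality at the
midpoints `s₀ + (2 n + 1) a` gives `x (n+1) ^ (1 + μ) ≤ C ^ (1/γ) (x n - x (n+1))`. By convexity of
`t ↦ t ^ (-μ)` this forces `x n ^ (-μ)` to grow at least linearly (if `x (n+1) < x n / 2` the gain
is a fixed multiple of `x n ^ (-μ) ≥ D ^ (-μ)`), so `x n ≲ n ^ (-1/μ) = n ^ (-γ/(1-γ))`, and
monotonicity of `w` interpolates between the samples.

On each window of length `2 a` the integrand is at most `(x n - x (n+2)) ^ ζ`. Summation by parts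
makes `∑ n ^ q (x n - x (n+1))` finite for every `q < γ / (1 - γ)`, and Young's inequality
`d ^ ζ ≤ ζ n ^ q d + (1 - ζ) n ^ (-q ζ / (1 - ζ))` then bounds `∑ (x n - x (n+1)) ^ ζ` as soon as
`(1 - ζ) / ζ < q`; such a `q` exists exactly because `ζ > 1 - γ`.
-/

open Real Set MeasureTheory

theorem rpow_tangent_le {p u v : ℝ} (hp : 1 ≤ p) (hu : 0 ≤ u) (hv : 0 < v) :
    v ^ p + p * v ^ (p - 1) * (u - v) ≤ u ^ p := by
  have h := one_add_mul_self_le_rpow_one_add (s := u / v - 1)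
    (by linarith [div_nonneg hu hv.le]) hp
  rw [add_sub_cancel, div_rpow hu hv.le, le_div_iff₀ (rpow_pos_of_pos hv p)] at h
  calc v ^ p + p * v ^ (p - 1) * (u - v) = (1 + p * (u / v - 1)) * v ^ p := by
        rw [rpow_sub_one hv.ne']; field_simp
    _ ≤ u ^ p := h

theorem rpow_neg_add_le_rpow_neg {μ x y : ℝ} (hμ : 0 ≤ μ) (hy : 0 < y) (hyx : y ≤ x) :
    x ^ (-μ) + μ * (x - y) / x ^ (1 + μ) ≤ y ^ (-μ) := by
  have hx : 0 < x := hy.trans_le hyx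
  -- the tangent line of `t ↦ t ^ (1 + μ)` at `x⁻¹`, evaluated at `y⁻¹` and multiplied by `y`
  have h := mul_le_mul_of_nonneg_left
    (rpow_tangent_le (by linarith : 1 ≤ 1 + μ) (inv_nonneg.2 hy.le) (inv_pos.2 hx)) hy.le
  simp only [inv_rpow hx.le, inv_rpow hy.le, add_sub_cancel_left, rpow_neg hx.le,
    rpow_neg hy.le, rpow_add hx, rpow_add hy, rpow_one] at h ⊢
  have hxμ := rpow_pos_of_pos hx μ
  have hyμ := rpow_pos_of_pos hy μ
  calc (x ^ μ)⁻¹ + μ * (x - y) / (x * x ^ μ)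
      = y * ((x * x ^ μ)⁻¹ + (1 + μ) * (x ^ μ)⁻¹ * (y⁻¹ - x⁻¹)) := by field_simp; ring
    _ ≤ y * (y * y ^ μ)⁻¹ := h
    _ = (y ^ μ)⁻¹ := by field_simp

theorem rpow_neg_add_min_le_rpow_neg {μ κ D x y : ℝ} (hμ : 0 < μ) (hκ : 0 < κ) (hy : 0 < y)
    (hyx : y ≤ x) (hxD : x ≤ D) (h : y ^ (1 + μ) ≤ κ * (x - y)) :
    x ^ (-μ) + min (μ / (2 ^ (1 + μ) * κ)) ((2 ^ μ - 1) * D ^ (-μ)) ≤ y ^ (-μ) := by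
  have hx : 0 < x := hy.trans_le hyx
  rcases le_or_gt x (2 * y) with hx2y | h2yx
  · have hpow : x ^ (1 + μ) ≤ 2 ^ (1 + μ) * κ * (x - y) := calc
      x ^ (1 + μ) ≤ (2 * y) ^ (1 + μ) := rpow_le_rpow hx.le hx2y (by linarith)
      _ = 2 ^ (1 + μ) * y ^ (1 + μ) := mul_rpow zero_le_two hy.le
      _ ≤ 2 ^ (1 + μ) * (κ * (x - y)) := by gcongr
      _ = 2 ^ (1 + μ) * κ * (x - y) := by ring
    have hgain : μ / (2 ^ (1 + μ) * κ) ≤ μ * (x - y) / x ^ (1 + μ) := by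
      rw [div_le_div_iff₀ (by positivity) (by positivity)]
      nlinarith [mul_le_mul_of_nonneg_left hpow hμ.le]
    linarith [min_le_left (μ / (2 ^ (1 + μ) * κ)) ((2 ^ μ - 1) * D ^ (-μ)),
      rpow_neg_add_le_rpow_neg hμ.le hy hyx]
  · have h2μ : 1 ≤ (2 : ℝ) ^ μ := one_le_rpow one_le_two hμ.le
    have hhalf : (x / 2) ^ (-μ) ≤ y ^ (-μ) :=
      rpow_le_rpow_of_nonpos hy (by linarith) (by linarith)
    rw [div_rpow hx.le zero_le_two, rpow_neg zero_le_two, div_inv_eq_mul] at hhalf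
    have hD : (2 ^ μ - 1) * D ^ (-μ) ≤ (2 ^ μ - 1) * x ^ (-μ) :=
      mul_le_mul_of_nonneg_left (rpow_le_rpow_of_nonpos hx hxD (by linarith)) (by linarith)
    linarith [min_le_right (μ / (2 ^ (1 + μ) * κ)) ((2 ^ μ - 1) * D ^ (-μ))]

theorem le_mul_one_add_rpow_of_rpow_neg_add_le {μ c D : ℝ} {x : ℕ → ℝ} (hμ : 0 < μ)
    (hc : 0 < c) (hD : 0 < D) (hx : Antitone x) (hx0 : x 0 ≤ D)
    (hstep : ∀ n, 0 < x (n + 1) → x n ^ (-μ) + c ≤ x (n + 1) ^ (-μ)) (n : ℕ) :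
    x n ≤ min c (D ^ (-μ)) ^ (-μ⁻¹) * (1 + n) ^ (-μ⁻¹) := by
  have hm : 0 < min c (D ^ (-μ)) := lt_min hc (rpow_pos_of_pos hD _)
  rcases le_or_gt (x n) 0 with hxn | hxn
  · exact hxn.trans (by positivity)
  have hlin : ∀ k, 0 < x k → D ^ (-μ) + k * c ≤ x k ^ (-μ) := by
    intro k
    induction k with
    | zero => intro hk; simpa using rpow_le_rpow_of_nonpos hk hx0 (by linarith)
    | succ k ih =>
      intro hk
      have := ih (hk.trans_le (hx k.le_succ))
      push_cast
      linarith [hstep k hk]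
  have hmn : min c (D ^ (-μ)) * (1 + n) ≤ x n ^ (-μ) := by
    have := hlin n hxn
    nlinarith [min_le_left c (D ^ (-μ)), min_le_right c (D ^ (-μ)), n.cast_nonneg (α := ℝ)]
  calc x n = (x n ^ (-μ)) ^ (-μ⁻¹) := by
        rw [← rpow_mul hxn.le, neg_mul_neg, mul_inv_cancel₀ hμ.ne', rpow_one]
    _ ≤ (min c (D ^ (-μ)) * (1 + n)) ^ (-μ⁻¹) :=
        rpow_le_rpow_of_nonpos (by positivity) hmn (by simp [hμ.le])
    _ = min c (D ^ (-μ)) ^ (-μ⁻¹) * (1 + n) ^ (-μ⁻¹) := mul_rpow hm.le (by positivity)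

theorem exists_le_mul_one_add_rpow_of_le_mul_sub_rpow {γ C D : ℝ} (hγ : γ ∈ Ioo 0 1)
    (hC : 0 < C) (hD : 0 < D) :
    ∃ K, 0 < K ∧ ∀ x : ℕ → ℝ, Antitone x → x 0 ≤ D →
      (∀ n, x (n + 1) ≤ C * (x n - x (n + 1)) ^ γ) →
      ∀ n : ℕ, x n ≤ K * (1 + n) ^ (-(γ / (1 - γ))) := by
  obtain ⟨hγ0, hγ1⟩ := hγ
  set μ := (1 - γ) / γ with hμ_def
  have hμ : 0 < μ := div_pos (by linarith) hγ0
  have hinv : γ⁻¹ = 1 + μ := by rw [hμ_def]; field_simp; ring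
  set c := min (μ / (2 ^ (1 + μ) * C ^ γ⁻¹)) ((2 ^ μ - 1) * D ^ (-μ))
  have hc : 0 < c := lt_min (by positivity)
    (mul_pos (by linarith [one_lt_rpow one_lt_two hμ]) (rpow_pos_of_pos hD _))
  refine ⟨min c (D ^ (-μ)) ^ (-μ⁻¹), rpow_pos_of_pos (lt_min hc (rpow_pos_of_pos hD _)) _,
    fun x hx hx0 hrec n => ?_⟩
  have hexp : μ⁻¹ = γ / (1 - γ) := by rw [hμ_def, inv_div]
  rw [← hexp]
  refine le_mul_one_add_rpow_of_rpow_neg_add_le hμ hc hD hx hx0 (fun k hk => ?_) n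
  have hd : 0 ≤ x k - x (k + 1) := sub_nonneg.2 (hx k.le_succ)
  refine rpow_neg_add_min_le_rpow_neg hμ (by positivity) hk (hx k.le_succ)
    ((hx (Nat.zero_le k)).trans hx0) ?_
  calc x (k + 1) ^ (1 + μ) = x (k + 1) ^ γ⁻¹ := by rw [hinv]
    _ ≤ (C * (x k - x (k + 1)) ^ γ) ^ γ⁻¹ := rpow_le_rpow hk.le (hrec k) (by positivity)
    _ = C ^ γ⁻¹ * (x k - x (k + 1)) := by
        rw [mul_rpow hC.le (rpow_nonneg hd γ), ← rpow_mul hd, mul_inv_cancel₀ hγ0.ne',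
          rpow_one]

theorem rpow_le_mul_add_mul_rpow {ζ d t : ℝ} (hζ0 : 0 ≤ ζ) (hζ1 : ζ < 1) (hd : 0 ≤ d)
    (ht : 0 < t) : d ^ ζ ≤ ζ * (t * d) + (1 - ζ) * t ^ (-(ζ / (1 - ζ))) := by
  have h := geom_mean_le_arith_mean2_weighted hζ0 (by linarith : 0 ≤ 1 - ζ)
    (mul_nonneg ht.le hd) (rpow_nonneg ht.le (-(ζ / (1 - ζ)))) (by ring)
  rwa [mul_rpow ht.le hd, ← rpow_mul ht.le, neg_mul, div_mul_cancel₀ _ (by linarith),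
    mul_right_comm, ← rpow_add ht, add_neg_cancel, rpow_zero, one_mul] at h

theorem summable_one_add_nat_rpow {e : ℝ} (he : e < -1) :
    Summable fun n : ℕ => (1 + n : ℝ) ^ e := by
  simpa [add_comm] using (summable_nat_add_iff 1).2 (Real.summable_nat_rpow.2 he)

theorem sum_range_mul_sub_succ_add (x b : ℕ → ℝ) (N : ℕ) :
    ∑ n ∈ Finset.range N, b n * (x n - x (n + 1)) + b N * x N =
      b 0 * x 0 + ∑ n ∈ Finset.range N, (b (n + 1) - b n) * x (n + 1) := by
  induction N with
  | zero => simp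
  | succ N ih => simp only [Finset.sum_range_succ]; linarith

theorem summable_mul_sub_succ {x b : ℕ → ℝ} (hx0 : ∀ n, 0 ≤ x n) (hx : Antitone x)
    (hb0 : ∀ n, 0 ≤ b n) (hb : Monotone b)
    (h : Summable fun n => (b (n + 1) - b n) * x (n + 1)) :
    Summable fun n => b n * (x n - x (n + 1)) := by
  refine summable_of_sum_range_le (c := b 0 * x 0 + ∑' n, (b (n + 1) - b n) * x (n + 1))
    (fun n => mul_nonneg (hb0 n) (sub_nonneg.2 (hx n.le_succ))) fun N => ?_
  have hterm : ∀ n, 0 ≤ (b (n + 1) - b n) * x (n + 1) :=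
    fun n => mul_nonneg (sub_nonneg.2 (hb n.le_succ)) (hx0 _)
  linarith [sum_range_mul_sub_succ_add x b N, mul_nonneg (hb0 N) (hx0 N),
    h.sum_le_tsum (Finset.range N) (fun n _ => hterm n)]

theorem summable_sub_succ_rpow {x : ℕ → ℝ} {K p ζ : ℝ} (hp : 1 < p) (hζp : 1 - ζ < ζ * p)
    (hζ1 : ζ < 1) (hx0 : ∀ n, 0 ≤ x n) (hx : Antitone x)
    (hK : ∀ n : ℕ, x n ≤ K * (1 + n) ^ (-p)) :
    Summable fun n => (x n - x (n + 1)) ^ ζ := by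
  have hζ0 : 0 < ζ := by nlinarith
  obtain ⟨q, hq1, hqp, hqζ⟩ : ∃ q, 1 ≤ q ∧ q < p ∧ 1 - ζ < ζ * q := by
    refine ⟨(max 1 ((1 - ζ) / ζ) + p) / 2, ?_, ?_, ?_⟩
    · linarith [le_max_left 1 ((1 - ζ) / ζ)]
    · linarith [max_lt hp ((div_lt_iff₀' hζ0).2 hζp)]
    · rw [← div_lt_iff₀' hζ0]
      linarith [le_max_right 1 ((1 - ζ) / ζ), (div_lt_iff₀' hζ0).2 hζp]
  have hK0 : 0 ≤ K := by simpa using (hx0 0).trans (hK 0)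
  set b : ℕ → ℝ := fun n => (1 + n) ^ q
  have hb : Monotone b := fun m n hmn => rpow_le_rpow (by positivity)
    (by simpa using hmn) (by linarith)
  have hgap : ∀ n : ℕ, (b (n + 1) - b n) * x (n + 1) ≤ q * K * (1 + n) ^ (q - 1 - p) := by
    intro n
    have h1 : (0 : ℝ) < 1 + n := by positivity
    have h2 : (0 : ℝ) < 1 + (n + 1 : ℕ) := by positivity
    have hdiff : b (n + 1) - b n ≤ q * (1 + (n + 1 : ℕ) : ℝ) ^ (q - 1) := by
      have := rpow_tangent_le hq1 h1.le h2
      simp only [b]; push_cast at this ⊢; nlinarith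
    calc (b (n + 1) - b n) * x (n + 1)
        ≤ q * (1 + (n + 1 : ℕ) : ℝ) ^ (q - 1) * (K * (1 + (n + 1 : ℕ) : ℝ) ^ (-p)) :=
          mul_le_mul hdiff (hK _) (hx0 _) (by positivity)
      _ = q * K * (1 + (n + 1 : ℕ) : ℝ) ^ (q - 1 - p) := by
          rw [sub_eq_add_neg (q - 1) p, rpow_add h2]; ring
      _ ≤ q * K * (1 + n) ^ (q - 1 - p) := by
          gcongr q * K * ?_
          exact rpow_le_rpow_of_nonpos h1 (by push_cast; linarith) (by linarith)
  have hweighted : Summable fun n => b n * (x n - x (n + 1)) :=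
    summable_mul_sub_succ hx0 hx (fun n => by positivity) hb
      (Summable.of_nonneg_of_le
        (fun n => mul_nonneg (sub_nonneg.2 (hb n.le_succ)) (hx0 _)) hgap
        ((summable_one_add_nat_rpow (by linarith)).mul_left (q * K)))
  have htail : Summable fun n : ℕ => (1 + n : ℝ) ^ (-(q * ζ / (1 - ζ))) :=
    summable_one_add_nat_rpow (by rw [neg_lt_neg_iff, lt_div_iff₀ (by linarith)]; linarith)
  refine Summable.of_nonneg_of_le (fun n => rpow_nonneg (sub_nonneg.2 (hx n.le_succ)) ζ)
    (fun n => ?_) ((hweighted.mul_left ζ).add (htail.mul_left (1 - ζ)))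
  have h := rpow_le_mul_add_mul_rpow hζ0.le hζ1 (sub_nonneg.2 (hx n.le_succ))
    (rpow_pos_of_pos (by positivity : (0 : ℝ) < 1 + n) q)
  rwa [← rpow_mul (by positivity), mul_neg, ← mul_div_assoc] at h

theorem summable_sub_add_two_rpow {x : ℕ → ℝ} {ζ : ℝ} (hζ0 : 0 ≤ ζ) (hζ1 : ζ ≤ 1)
    (hx : Antitone x) (h : Summable fun n => (x n - x (n + 1)) ^ ζ) :
    Summable fun n => (x n - x (n + 2)) ^ ζ := by
  refine Summable.of_nonneg_of_le (fun n => rpow_nonneg (sub_nonneg.2 (hx (by omega))) ζ)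
    (fun n => ?_) (h.add ((summable_nat_add_iff 1).2 h))
  calc (x n - x (n + 2)) ^ ζ = ((x n - x (n + 1)) + (x (n + 1) - x (n + 1 + 1))) ^ ζ := by
        ring_nf
    _ ≤ _ := rpow_add_le_add_rpow (sub_nonneg.2 (hx n.le_succ))
        (sub_nonneg.2 (hx (n + 1).le_succ)) hζ0 hζ1

theorem exists_nat_mem_Ico_add_mul {T L s : ℝ} (hL : 0 < L) (hs : T ≤ s) :
    ∃ n : ℕ, s ∈ Ico (T + n * L) (T + (n + 1) * L) := by
  have hnn : 0 ≤ (s - T) / L := div_nonneg (by linarith) hL.le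
  refine ⟨⌊(s - T) / L⌋₊, ?_, ?_⟩
  · linarith [(le_div_iff₀ hL).1 (Nat.floor_le hnn)]
  · linarith [(div_lt_iff₀ hL).1 (Nat.lt_floor_add_one ((s - T) / L))]

theorem le_mul_one_add_rpow_of_antitoneOn {f : ℝ → ℝ} {s₀ L K p : ℝ} (hL : 0 < L)
    (hp : 0 ≤ p) (hK : 0 ≤ K) (hf : AntitoneOn f (Ici s₀))
    (hsample : ∀ n : ℕ, f (s₀ + n * L) ≤ K * (1 + n) ^ (-p)) {s : ℝ} (hs : s₀ ≤ s) :
    f s ≤ K * (1 + L) ^ p * (1 + s - s₀) ^ (-p) := by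
  obtain ⟨n, hn, hn'⟩ := exists_nat_mem_Ico_add_mul hL hs
  have h1L : 0 < 1 + L := by linarith
  have hgrow : 1 + s - s₀ ≤ (1 + L) * (1 + n) := by nlinarith [n.cast_nonneg (α := ℝ)]
  calc f s ≤ f (s₀ + n * L) := hf (by simp; positivity) hs hn
    _ ≤ K * (1 + n) ^ (-p) := hsample n
    _ = K * (1 + L) ^ p * ((1 + L) * (1 + n)) ^ (-p) := by
        rw [mul_rpow h1L.le (by positivity), rpow_neg h1L.le]
        field_simp
    _ ≤ K * (1 + L) ^ p * (1 + s - s₀) ^ (-p) := by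
        gcongr K * (1 + L) ^ p * ?_
        exact rpow_le_rpow_of_nonpos (by linarith) hgrow (by linarith)

theorem integrableOn_Ici_of_norm_le_of_summable {E : Type*} [NormedAddCommGroup E]
    {f : ℝ → E} {T L : ℝ} {u : ℕ → ℝ} (hL : 0 < L)
    (hf : AEStronglyMeasurable f (volume.restrict (Ici T))) (hu : Summable u)
    (hfu : ∀ n : ℕ, ∀ s ∈ Ico (T + n * L) (T + (n + 1) * L), ‖f s‖ ≤ u n) :
    IntegrableOn f (Ici T) := by
  set I : ℕ → Set ℝ := fun n => Ico (T + n * L) (T + (n + 1) * L)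
  have hIT : ∀ n, I n ⊆ Ici T := fun n s hs => by
    simp only [I, mem_Ico] at hs; simp only [mem_Ici]; nlinarith [n.cast_nonneg (α := ℝ)]
  have hvol : ∀ n, volume (I n) < ⊤ := fun n => measure_Ico_lt_top
  have hpiece : ∀ n, IntegrableOn f (I n) := fun n =>
    .of_bound (hvol n) (hf.mono_set (hIT n)) (u n)
      ((ae_restrict_iff' measurableSet_Ico).2 (Filter.Eventually.of_forall (hfu n)))
  have hint : ∀ n, ∫ s in I n, ‖f s‖ ≤ u n * L := fun n => by
    have := norm_setIntegral_le_of_norm_le_const (hvol n)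
      (fun s hs => (norm_norm (f s)).trans_le (hfu n s hs))
    simp only [I, Real.volume_real_Ico] at this
    rw [max_eq_left (by nlinarith)] at this
    linarith [le_abs_self (∫ s in I n, ‖f s‖), Real.norm_eq_abs (∫ s in I n, ‖f s‖)]
  refine (integrableOn_iUnion_of_summable_integral_norm hpiece
    (Summable.of_nonneg_of_le (fun n => integral_nonneg fun _ => norm_nonneg _) hint
      (hu.mul_right L))).mono_set fun s hs => ?_
  obtain ⟨n, hn⟩ := exists_nat_mem_Ico_add_mul hL hs
  exact mem_iUnion.2 ⟨n, hn⟩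

theorem integrableOn_Ici_rpow_sub_of_summable {w : ℝ → ℝ} {s₀ a ζ : ℝ} (ha : 0 < a)
    (hζ : 0 ≤ ζ) (hw : MonotoneOn w (Ici s₀))
    (hsum : Summable fun n : ℕ => (w (s₀ + (n + 2 : ℕ) * (2 * a)) - w (s₀ + n * (2 * a))) ^ ζ) :
    IntegrableOn (fun s => (w (s + a) - w (s - a)) ^ ζ) (Ici (s₀ + a)) := by
  have hplus : MonotoneOn (fun s => w (s + a)) (Ici (s₀ + a)) := fun s hs t ht hst =>
    hw (by simp at hs ⊢; linarith) (by simp at ht ⊢; linarith) (by linarith)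
  have hminus : MonotoneOn (fun s => w (s - a)) (Ici (s₀ + a)) := fun s hs t ht hst =>
    hw (by simp at hs ⊢; linarith) (by simp at ht ⊢; linarith) (by linarith)
  refine integrableOn_Ici_of_norm_le_of_summable (by positivity : 0 < 2 * a)
    (((aemeasurable_restrict_of_monotoneOn measurableSet_Ici hplus).sub
      (aemeasurable_restrict_of_monotoneOn measurableSet_Ici hminus)).pow_const ζ
      |>.aestronglyMeasurable) hsum fun n s ⟨hs, hs'⟩ => ?_
  have hn : (0 : ℝ) ≤ n := n.cast_nonneg
  have hgap : 0 ≤ w (s + a) - w (s - a) :=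
    sub_nonneg.2 (hw (by simp; nlinarith) (by simp; nlinarith) (by linarith))
  rw [Real.norm_of_nonneg (rpow_nonneg hgap ζ)]
  refine rpow_le_rpow hgap (sub_le_sub (hw (by simp; nlinarith) (by simp; positivity) ?_)
    (hw (by simp; positivity) (by simp; nlinarith) (by nlinarith))) hζ
  push_cast; nlinarith

section Samples

variable {w : ℝ → ℝ} {s₀ a Θ : ℝ}

theorem antitone_sub_add_nat_mul (hw : MonotoneOn w (Ici s₀)) {L : ℝ} (hL : 0 ≤ L) :
    Antitone fun n : ℕ => Θ - w (s₀ + n * L) := fun m n hmn =>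
  sub_le_sub_left (hw (by simp; positivity) (by simp; positivity) (by gcongr)) Θ

theorem sub_add_nat_mul_succ_le_mul_sub_rpow {C γ : ℝ} (ha : 0 < a)
    (hw : MonotoneOn w (Ici s₀))
    (hloj : ∀ s, s₀ + a ≤ s → Θ - w s ≤ C * (w (s + a) - w (s - a)) ^ γ) (n : ℕ) :
    Θ - w (s₀ + (n + 1 : ℕ) * (2 * a)) ≤
      C * ((Θ - w (s₀ + n * (2 * a))) - (Θ - w (s₀ + (n + 1 : ℕ) * (2 * a)))) ^ γ := by
  have hn : (0 : ℝ) ≤ n := n.cast_nonneg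
  have h := hloj (s₀ + (2 * n + 1) * a) (by nlinarith)
  rw [show s₀ + (2 * n + 1) * a + a = s₀ + (n + 1 : ℕ) * (2 * a) by push_cast; ring,
    show s₀ + (2 * n + 1) * a - a = s₀ + n * (2 * a) by ring] at h
  rw [sub_sub_sub_cancel_left]
  refine le_trans (sub_le_sub_left ?_ Θ) h
  exact hw (by simp; nlinarith) (by simp; positivity) (by push_cast; nlinarith)

end Samples

/-- Continuous-time Lojasiewicz iteration: a nondecreasing bounded function `w` on `[s₀,∞)`
with supremum `Θ` satisfying `Θ - w(s) ≤ C (w(s+a) - w(s-a))^γ` decays polynomially, with a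
constant depending only on `γ`, `a`, `C` and `Θ - w(s₀)`, and for every `ζ ∈ (1-γ, 1)` the
integral `∫_{s₀+a}^∞ (w(s'+a) - w(s'-a))^ζ ds'` is finite. -/
theorem stmt_10 (γ a C D : ℝ) (hγ : γ ∈ Set.Ioo (1 / 2 : ℝ) 1) (ha : 0 < a) (hC : 0 < C) :
    ∃ C' : ℝ, ∀ (s₀ : ℝ) (w : ℝ → ℝ) (Θ : ℝ),
      MonotoneOn w (Set.Ici s₀) →
      IsLUB (w '' Set.Ici s₀) Θ →
      Θ - w s₀ ≤ D →
      (∀ s, s₀ + a ≤ s → Θ - w s ≤ C * (w (s + a) - w (s - a)) ^ γ) →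
      (∀ s, s₀ + a ≤ s → Θ - w s ≤ C' * (1 + s - s₀) ^ (-(γ / (1 - γ)))) ∧
        ∀ ζ ∈ Set.Ioo (1 - γ) 1,
          MeasureTheory.IntegrableOn (fun s' => (w (s' + a) - w (s' - a)) ^ ζ)
            (Set.Ici (s₀ + a)) := by
  obtain ⟨hγ_half, hγ_one⟩ := hγ
  obtain ⟨K, hK, hdecay⟩ := exists_le_mul_one_add_rpow_of_le_mul_sub_rpow (D := max D 1)
    ⟨by linarith, hγ_one⟩ hC (lt_max_of_lt_right one_pos)
  have hp : 1 < γ / (1 - γ) := by rw [lt_div_iff₀ (by linarith)]; linarith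
  refine ⟨K * (1 + 2 * a) ^ (γ / (1 - γ)), fun s₀ w Θ hw hlub hD hloj => ?_⟩
  set X : ℕ → ℝ := fun n => Θ - w (s₀ + n * (2 * a))
  have hX : Antitone X := antitone_sub_add_nat_mul hw (by positivity)
  have hX0 : ∀ n, 0 ≤ X n := fun n => sub_nonneg.2 (hlub.1 ⟨_, by simp; positivity, rfl⟩)
  have hXdecay := hdecay X hX (by simpa [X] using hD.trans (le_max_left D 1))
    (sub_add_nat_mul_succ_le_mul_sub_rpow ha hw hloj)
  refine ⟨fun s hs => le_mul_one_add_rpow_of_antitoneOn (f := fun s => Θ - w s)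
    (by positivity) (by positivity) hK.le (fun _ hs _ ht hst => sub_le_sub_left (hw hs ht hst) Θ)
    hXdecay (by linarith), fun ζ ⟨hζγ, hζ1⟩ => ?_⟩
  have hsum := summable_sub_add_two_rpow (by linarith) hζ1.le hX <|
    summable_sub_succ_rpow hp (by rw [mul_div_assoc', lt_div_iff₀ (by linarith)]; nlinarith)
      hζ1 hX0 hX hXdecay
  exact integrableOn_Ici_rpow_sub_of_summable ha (by linarith) hw
    (by simpa only [X, sub_sub_sub_cancel_left] using hsum)
end
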